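/- Let M ≥ 2, α = M^{-k}, β = M^{2k} for some k ≥ 1, and define φ_k(z₁,z₂) = log|z₁| + α·log(|z₁| + |z₂/k|^β) on ℂ². For any integers m ≥ 0 and ε ∈ (0,1), if (1-ε)(1+α) - (m+1)/β ≥ 1 then ∫_{Δ×Δ} |z₂|^{2m} e^{-2(1-ε)φ_k} dλ₄ = +∞, where Δ is the unit disc in ℂ and λ₄ is Lebesgue measure on ℂ². -/

import Mathlib

/-!
On the region where `ρ/2 ≤ |z₂| < ρ` with `ρ = k |z₁|^{1/β}`, the term `|z₂/k|^β` is at most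
`|z₁|`, so the integrand is at least a constant times `|z₁|^{2m/β - 2(1-ε)(1+α)}`. Integrating
out `z₂` over this annulus of area `≍ |z₁|^{2/β}` leaves a constant times
`∫_{|z₁|<δ} |z₁|^{-2((1-ε)(1+α) - (m+1)/β)}`, which diverges because the exponent is at most `-2`,
the real dimension of `ℂ`.
-/

open MeasureTheory Filter Metric Complex Set Topology

noncomputable section

/-- `e2 x` represents `e^{-2x}` for extended-real `x` (value `0` at `x = ⊥`,
where the correct value `+∞` cannot be represented in `ℝ`; in all statements the
`⊥`-locus is negligible or handled separately). -/
def e2 (x : EReal) : ℝ := if x = ⊥ then 0 else Real.exp (-2 * x.toReal)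

/-- Subharmonicity of `u : ℂ → EReal` on `U`: upper semicontinuity together with
the sub-mean-value inequality over all sufficiently small circles. -/
def SubharmonicOn' (u : ℂ → EReal) (U : Set ℂ) : Prop :=
  UpperSemicontinuousOn u U ∧
    ∀ z ∈ U, ∀ᶠ (r : ℝ) in 𝓝[>] (0 : ℝ),
      u z ≤ (((2 * Real.pi)⁻¹ *
        ∫ θ in (0:ℝ)..(2 * Real.pi),
          (u (z + (r : ℂ) * Complex.exp ((θ : ℂ) * Complex.I))).toReal : ℝ) : EReal)

/-- `u` is subharmonic on some open neighborhood of `z₀`. -/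
def SubharmonicNear (u : ℂ → EReal) (z₀ : ℂ) : Prop :=
  ∃ U : Set ℂ, IsOpen U ∧ z₀ ∈ U ∧ SubharmonicOn' u U

/-- The Lelong number of `u` at `z₀` equals `γ`:
`(sup_{|z-z₀|=r} u)/log r → γ` as `r → 0⁺`. -/
def HasLelongAt (u : ℂ → EReal) (z₀ : ℂ) (γ : ℝ) : Prop :=
  Tendsto (fun r : ℝ => (⨆ z ∈ sphere z₀ r, u z).toReal / Real.log r)
    (𝓝[>] (0:ℝ)) (𝓝 γ)

/-- `f` is integrable on some ball around `z₀` (local integrability near `z₀`). -/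
def LocInt (f : ℂ → ℝ) (z₀ : ℂ) : Prop :=
  ∃ r > 0, IntegrableOn f (ball z₀ r) volume

/-- Plurisubharmonicity of `u : ℂ × ℂ → EReal` on `U`: upper semicontinuity
together with subharmonicity of the restriction to every complex line. -/
def PSHOn (u : ℂ × ℂ → EReal) (U : Set (ℂ × ℂ)) : Prop :=
  UpperSemicontinuousOn u U ∧
    ∀ a b : ℂ × ℂ, SubharmonicOn' (fun t : ℂ => u (a + t • b)) {t : ℂ | a + t • b ∈ U}

/-- The (two dimensional) Lelong number of `u` at `x` equals `γ`:
`(sup_{|z-x|≤r} u)/log r → γ` as `r → 0⁺`. -/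
def HasLelongAt2 (u : ℂ × ℂ → EReal) (x : ℂ × ℂ) (γ : ℝ) : Prop :=
  Tendsto (fun r : ℝ => (⨆ z ∈ closedBall x r, u z).toReal / Real.log r)
    (𝓝[>] (0:ℝ)) (𝓝 γ)

/-- `f` is integrable on some ball around `x` in `ℂ²`. -/
def LocInt2 (f : ℂ × ℂ → ℝ) (x : ℂ × ℂ) : Prop :=
  ∃ r > 0, IntegrableOn f (ball x r) volume

/-- The k-th term (k ≥ 1) of the Guan–Li series:
`α_k · log(|z₁| + |z₂/k|^{β_k})` with `α_k = M^{-k}`, `β_k = M^{2k}`. -/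
def phiTerm (M : ℝ) (k : ℕ) (z : ℂ × ℂ) : ℝ :=
  M ^ (-(k : ℤ)) * Real.log (‖z.1‖ +
    (‖z.2‖ / (k : ℝ)) ^ (M ^ (2 * k) : ℝ))

/-- The plurisubharmonic weight
`φ(z) = log|z₁| + ∑_{k≥1} M^{-k} log(|z₁| + |z₂/k|^{M^{2k}})`,
with value `⊥ = -∞` on `{z₁ = 0}` (where the series diverges to `-∞`). -/
def phi (M : ℝ) (z : ℂ × ℂ) : EReal :=
  if z.1 = 0 then ⊥ else
    ((Real.log (‖z.1‖) + ∑' k : ℕ, phiTerm M (k + 1) z : ℝ) : EReal)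

theorem lintegral_ball_norm_rpow_eq_top {E : Type*} [NormedAddCommGroup E] [NormedSpace ℝ E]
    [FiniteDimensional ℝ E] [Nontrivial E] [MeasurableSpace E] [BorelSpace E]
    (μ : Measure E) [μ.IsAddHaarMeasure] {q r : ℝ} (hq : q ≤ -Module.finrank ℝ E) (hr : 0 < r) :
    ∫⁻ x in ball (0 : E) r, ENNReal.ofReal (‖x‖ ^ q) ∂μ = ⊤ := by
  by_contra hfin
  have hint : IntegrableOn (fun x : E => ‖x‖ ^ q) (ball 0 r) μ :=
    ⟨(measurable_norm.pow_const q).aestronglyMeasurable,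
      (hasFiniteIntegral_iff_ofReal (.of_forall fun x => by positivity)).2
        (lt_top_iff_ne_top.2 hfin)⟩
  rw [integrableOn_fun_norm_addHaar μ (f := fun y => y ^ q)] at hint
  have hpow : IntegrableOn (fun y : ℝ => y ^ (Module.finrank ℝ E - 1 + q)) (Ioo 0 r) := by
    refine hint.congr_fun (fun y hy => ?_) measurableSet_Ioo
    simp only [smul_eq_mul]
    rw [Real.rpow_add hy.1, ← Real.rpow_natCast, Nat.cast_sub Module.finrank_pos, Nat.cast_one]
  rw [intervalIntegral.integrableOn_Ioo_rpow_iff hr] at hpow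
  linarith

theorem setLIntegral_prod_comp_fst {α β : Type*} [MeasurableSpace α] [MeasurableSpace β]
    {μ : Measure α} {ν : Measure β} [SFinite ν] {A : Set α} {F : α → Set β}
    (hA : MeasurableSet A) (hS : MeasurableSet {z : α × β | z.1 ∈ A ∧ z.2 ∈ F z.1})
    {f : α → ENNReal} (hf : Measurable f) :
    ∫⁻ z in {z : α × β | z.1 ∈ A ∧ z.2 ∈ F z.1}, f z.1 ∂μ.prod ν = ∫⁻ x in A, f x * ν (F x) ∂μ := by
  set S := {z : α × β | z.1 ∈ A ∧ z.2 ∈ F z.1}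
  rw [← lintegral_indicator hS,
    lintegral_prod (S.indicator fun z => f z.1)
      ((hf.comp measurable_fst).indicator hS).aemeasurable,
    ← lintegral_indicator hA]
  refine lintegral_congr fun x => ?_
  have hfiber : (fun y => S.indicator (fun z => f z.1) (x, y)) =
      (Prod.mk x ⁻¹' S).indicator (fun _ => f x) := rfl
  rw [hfiber, lintegral_indicator_const (measurable_prodMk_left hS)]
  by_cases hx : x ∈ A <;> simp [S, hx]

theorem Complex.volume_ball_sdiff_ball_half {ρ : ℝ} (hρ : 0 ≤ ρ) :
    volume (ball (0 : ℂ) ρ \ ball 0 (ρ / 2)) = ENNReal.ofReal (3 / 4 * Real.pi * ρ ^ 2) := by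
  rw [measure_sdiff (ball_subset_ball (by linarith)) measurableSet_ball.nullMeasurableSet
    measure_ball_lt_top.ne, Complex.volume_ball, Complex.volume_ball, ← ENNReal.ofReal_pow hρ,
    ← ENNReal.ofReal_pow (by positivity), ← ENNReal.ofReal_coe_nnreal, NNReal.coe_real_pi,
    ← ENNReal.ofReal_mul (by positivity), ← ENNReal.ofReal_mul (by positivity),
    ← ENNReal.ofReal_sub _ (by positivity)]
  ring_nf

theorem add_div_rpow_lt_two_mul {k b t u : ℝ} (hk : 0 < k) (hb : 0 < b) (ht : 0 < t)
    (hu : 0 ≤ u) (hut : u < k * t ^ b⁻¹) : t + (u / k) ^ b < 2 * t := by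
  have : (u / k) ^ b < (t ^ b⁻¹) ^ b :=
    Real.rpow_lt_rpow (by positivity) ((div_lt_iff₀' hk).2 hut) hb
  rw [← Real.rpow_mul ht.le, inv_mul_cancel₀ hb.ne', Real.rpow_one] at this
  linarith

theorem le_rpow_mul_rpow_add_rpow {k b a s t u : ℝ} (m : ℕ) (hk : 0 < k) (hb : 0 < b)
    (ha : 0 ≤ a) (ht : 0 < t) (hu : k * t ^ b⁻¹ / 2 ≤ u) (hut : u < k * t ^ b⁻¹) :
    (k / 2) ^ (2 * m) * 2 ^ (-a) * t ^ (2 * m / b + s - a) ≤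
      u ^ (2 * m) * (t ^ s * (t + (u / k) ^ b) ^ (-a)) := by
  have hu0 : 0 ≤ u := le_trans (by positivity) hu
  have hpow : (k / 2) ^ (2 * m) * t ^ (2 * m / b) ≤ u ^ (2 * m) :=
    calc (k / 2) ^ (2 * m) * t ^ (2 * m / b) = (k / 2 * t ^ b⁻¹) ^ (2 * m) := by
          rw [mul_pow, ← Real.rpow_natCast (t ^ b⁻¹), ← Real.rpow_mul ht.le]
          push_cast
          ring_nf
      _ ≤ u ^ (2 * m) := pow_le_pow_left₀ (by positivity) (by linarith) _
  have hsum : (2 * t) ^ (-a) ≤ (t + (u / k) ^ b) ^ (-a) :=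
    Real.rpow_le_rpow_of_nonpos (by positivity) (add_div_rpow_lt_two_mul hk hb ht hu0 hut).le
      (by linarith)
  calc (k / 2) ^ (2 * m) * 2 ^ (-a) * t ^ (2 * m / b + s - a)
      = (k / 2) ^ (2 * m) * t ^ (2 * m / b) * (t ^ s * (2 * t) ^ (-a)) := by
        rw [Real.mul_rpow zero_le_two ht.le, Real.rpow_sub ht, Real.rpow_add ht,
          Real.rpow_neg ht.le]
        ring
    _ ≤ u ^ (2 * m) * (t ^ s * (t + (u / k) ^ b) ^ (-a)) := by gcongr

def annularRegion (k b δ : ℝ) : Set (ℂ × ℂ) :=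
  {z | z.1 ∈ ball 0 δ ∧ z.2 ∈ ball 0 (k * ‖z.1‖ ^ b⁻¹) \ ball 0 (k * ‖z.1‖ ^ b⁻¹ / 2)}

theorem measurableSet_annularRegion (k b δ : ℝ) : MeasurableSet (annularRegion k b δ) := by
  simp only [annularRegion, mem_ball_zero_iff, Set.mem_sdiff, not_lt, ofPred_and]
  measurability

theorem annularRegion_subset {k b : ℝ} (hk : 1 ≤ k) (hb : 0 < b) :
    annularRegion k b (k ^ (-b)) ⊆ ball 0 1 ×ˢ ball 0 1 := by
  rintro ⟨x, y⟩ ⟨hx, hy, -⟩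
  rw [mem_ball_zero_iff] at hx hy
  have hk0 : 0 < k := by linarith
  have hρ : k * ‖x‖ ^ b⁻¹ < 1 :=
    calc k * ‖x‖ ^ b⁻¹ < k * (k ^ (-b)) ^ b⁻¹ := by gcongr
      _ = 1 := by
        rw [← Real.rpow_mul hk0.le, neg_mul, mul_inv_cancel₀ hb.ne', Real.rpow_neg_one,
          mul_inv_cancel₀ hk0.ne']
  have hδ : k ^ (-b) ≤ 1 := Real.rpow_le_one_of_one_le_of_nonpos hk (by linarith)
  exact ⟨mem_ball_zero_iff.2 (by linarith), mem_ball_zero_iff.2 (by linarith)⟩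

theorem setLIntegral_annularRegion_eq_top {k b δ c q : ℝ} (hk : 0 < k) (hδ : 0 < δ)
    (hc : 0 < c) (hq : q + 2 / b ≤ -2) :
    ∫⁻ z in annularRegion k b δ, ENNReal.ofReal (c * ‖z.1‖ ^ q) = ⊤ := by
  have hfiber (x : ℂ) : ENNReal.ofReal (c * ‖x‖ ^ q) *
      volume (ball (0 : ℂ) (k * ‖x‖ ^ b⁻¹) \ ball 0 (k * ‖x‖ ^ b⁻¹ / 2)) =
      ENNReal.ofReal (c * (3 / 4 * Real.pi * k ^ 2)) * ENNReal.ofReal (‖x‖ ^ (q + 2 / b)) := by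
    rw [Complex.volume_ball_sdiff_ball_half (by positivity), ← ENNReal.ofReal_mul (by positivity),
      ← ENNReal.ofReal_mul (by positivity), Real.rpow_add' (norm_nonneg x) (by linarith),
      mul_pow, ← Real.rpow_natCast (‖x‖ ^ b⁻¹), ← Real.rpow_mul (norm_nonneg x)]
    ring_nf
  rw [Measure.volume_eq_prod, annularRegion,
    setLIntegral_prod_comp_fst (f := fun x => ENNReal.ofReal (c * ‖x‖ ^ q))
      (F := fun x => ball 0 (k * ‖x‖ ^ b⁻¹) \ ball 0 (k * ‖x‖ ^ b⁻¹ / 2))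
      measurableSet_ball (measurableSet_annularRegion k b δ) (by fun_prop)]
  simp_rw [hfiber]
  rw [lintegral_const_mul _ (by fun_prop), lintegral_ball_norm_rpow_eq_top volume (by simpa) hδ]
  exact ENNReal.mul_top (by simp; positivity)

/-- Let `M ≥ 2`, `α = M^{-k}`, `β = M^{2k}` for some `k ≥ 1`,
and `φ_k(z) = log|z₁| + α·log(|z₁| + |z₂/k|^β)`, so
`e^{-2(1-ε)φ_k} = |z₁|^{-2(1-ε)} (|z₁|+|z₂/k|^β)^{-2(1-ε)α}`.
For `m ≥ 0` and `ε ∈ (0,1)`, if `(1-ε)(1+α) - (m+1)/β ≥ 1`, then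
`∫_{Δ×Δ} |z₂|^{2m} e^{-2(1-ε)φ_k} dλ₄ = +∞`. -/
theorem stmt7 (M : ℝ) (hM : 2 ≤ M) (k : ℕ) (hk : 1 ≤ k) (m : ℕ) (ε : ℝ)
    (hε : ε ∈ Ioo (0:ℝ) 1)
    (hexp : (1 - ε) * (1 + M ^ (-(k : ℤ))) - ((m : ℝ) + 1) / M ^ (2 * k) ≥ 1) :
    ∫⁻ z in (ball (0:ℂ) 1) ×ˢ (ball (0:ℂ) 1),
      ENNReal.ofReal (‖z.2‖ ^ (2 * m) *
        (‖z.1‖ ^ (-(2 * (1 - ε)) : ℝ) *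
          (‖z.1‖ + (‖z.2‖ / (k : ℝ)) ^ (M ^ (2 * k) : ℝ))
            ^ (-(2 * (1 - ε) * M ^ (-(k : ℤ))) : ℝ))) = ⊤ := by
  set b : ℝ := M ^ (2 * k)
  set a : ℝ := 2 * (1 - ε) * M ^ (-(k : ℤ))
  have hb : 0 < b := by positivity
  have ha : 0 ≤ a := mul_nonneg (mul_nonneg zero_le_two (by linarith [hε.2])) (by positivity)
  have hk₁ : (1 : ℝ) ≤ k := by exact_mod_cast hk
  have hk₀ : (0 : ℝ) < k := by linarith
  set c : ℝ := (k / 2) ^ (2 * m) * 2 ^ (-a)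
  set q : ℝ := 2 * m / b + -(2 * (1 - ε)) - a
  have hq : q + 2 / b ≤ -2 := by
    have : q + 2 / b = -2 * ((1 - ε) * (1 + M ^ (-(k : ℤ))) - ((m : ℝ) + 1) / b) := by ring
    linarith
  have hlower : ∀ z ∈ annularRegion k b (k ^ (-b)), ENNReal.ofReal (c * ‖z.1‖ ^ q) ≤
      ENNReal.ofReal (‖z.2‖ ^ (2 * m) * (‖z.1‖ ^ (-(2 * (1 - ε))) *
        (‖z.1‖ + (‖z.2‖ / k) ^ b) ^ (-a))) := by
    rintro ⟨x, y⟩ ⟨-, hy⟩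
    simp only [Set.mem_sdiff, mem_ball_zero_iff, not_lt] at hy
    have hx : 0 < ‖x‖ := by
      by_contra! h
      rw [norm_le_zero_iff.1 h, norm_zero, Real.zero_rpow (inv_ne_zero hb.ne')] at hy
      linarith [norm_nonneg y]
    exact ENNReal.ofReal_le_ofReal (le_rpow_mul_rpow_add_rpow m hk₀ hb ha hx hy.2 hy.1)
  refine top_unique ?_
  calc ⊤ = ∫⁻ z in annularRegion k b (k ^ (-b)), ENNReal.ofReal (c * ‖z.1‖ ^ q) :=
        (setLIntegral_annularRegion_eq_top hk₀ (by positivity) (by positivity) hq).symm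
    _ ≤ _ := setLIntegral_mono' (measurableSet_annularRegion _ _ _) hlower
    _ ≤ _ := lintegral_mono_set (annularRegion_subset hk₁ hb)
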